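/- Let S be a local operator system contained in a unital Pro-C*-algebra A, B a Pro-C*-algebra, and φ : S → B a local completely positive map with respect to the pair of indices (α, β). Then φ is local completely bounded with ‖φ(1)‖_β = ‖φ‖_{(α,β)} = ‖φ‖^{lcb}_{(α,β)}, where ‖φ‖_{(α,β)} = sup { ‖φ(a)‖_β : ‖a‖_α ≤ 1 } and ‖φ‖^{lcb}_{(α,β)} = sup_n ‖φ^{(n)}‖_{(α,β)}. -/

import Mathlib

open scoped ComplexOrder

noncomputable section

variable {V : Type} [AddCommGroup V] [Module ℂ V]

/-- Conjugation `Xᴴ A X` of a `V`-valued matrix by a scalar matrix `X`. -/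
def sconj {n m : ℕ} (X : Matrix (Fin n) (Fin m) ℂ)
    (A : Matrix (Fin n) (Fin n) V) : Matrix (Fin m) (Fin m) V :=
  Matrix.of fun i j => ∑ p, ∑ q, ((starRingEnd ℂ) (X p i) * X q j) • A p q

/-- A (not necessarily proper) cone in a complex vector space. -/
def IsVCone {M : Type} [AddCommGroup M] [Module ℂ M] (C : Set M) : Prop :=
  (0 : M) ∈ C ∧ (∀ x ∈ C, ∀ y ∈ C, x + y ∈ C) ∧
    ∀ r : ℝ, 0 ≤ r → ∀ x ∈ C, (r : ℂ) • x ∈ C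

/-- A 2×2 block matrix of `n × n` blocks, reindexed to `Fin (n+n)`. -/
def blk {n : ℕ} (A B C D : Matrix (Fin n) (Fin n) V) :
    Matrix (Fin (n + n)) (Fin (n + n)) V :=
  Matrix.reindex finSumFinEquiv finSumFinEquiv (Matrix.fromBlocks A B C D)

/-- The diagonal matrix `diag (e, …, e)`. -/
def diagE (e : V) (n : ℕ) : Matrix (Fin n) (Fin n) V :=
  Matrix.diagonal fun _ => e

variable [StarAddMonoid V] [StarModule ℂ V]

/-- The seminorm at level `(α, n)` induced by the matrix cones `C` and the unit `e`:
`‖X‖_α^n = inf { r ≥ 0 : [[r eₙ, X],[X*, r eₙ]] ∈ C_α^{2n} }`. -/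
def nrm {Γ : Type} (C : Γ → (k : ℕ) → Set (Matrix (Fin k) (Fin k) V)) (e : V)
    (α : Γ) (n : ℕ) (X : Matrix (Fin n) (Fin n) V) : ℝ :=
  sInf {r : ℝ | 0 ≤ r ∧
    blk ((r : ℂ) • diagE e n) X (star X) ((r : ℂ) • diagE e n) ∈ C α (n + n)}

/-- A local matrix *-ordering on `V`: a downward filtered family of compatible matrix
cones of hermitian matrices whose total intersection with their negatives is trivial. -/
structure LMOrder (Γ : Type) (V : Type) [AddCommGroup V] [Module ℂ V]
    [StarAddMonoid V] [StarModule ℂ V] where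
  C : Γ → (n : ℕ) → Set (Matrix (Fin n) (Fin n) V)
  cone : ∀ α n, IsVCone (C α n)
  herm : ∀ α n, ∀ A ∈ C α n, star A = A
  filtered : ∀ α β : Γ, ∃ γ, ∀ n, C γ n ⊆ C α n ∩ C β n
  proper : ∀ n (A : Matrix (Fin n) (Fin n) V), (∀ α, A ∈ C α n ∧ -A ∈ C α n) → A = 0
  compat : ∀ (α : Γ) (n m : ℕ) (X : Matrix (Fin n) (Fin m) ℂ),
    ∀ A ∈ C α n, sconj X A ∈ C α m

/-- An abstract local operator system: a local matrix *-ordering together with an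
Archimedean matrix order unit. -/
structure LocalOpSys (Γ : Type) (V : Type) [AddCommGroup V] [Module ℂ V]
    [StarAddMonoid V] [StarModule ℂ V] extends LMOrder Γ V where
  e : V
  eherm : star e = e
  unit : ∀ (α : Γ) (n : ℕ) (A : Matrix (Fin n) (Fin n) V), star A = A →
    ∃ r : ℝ, 0 < r ∧ (r : ℂ) • diagE e n - A ∈ C α n
  arch : ∀ (α : Γ) (n : ℕ) (A : Matrix (Fin n) (Fin n) V),
    (∀ r : ℝ, 0 < r → (r : ℂ) • diagE e n + A ∈ C α n) → A ∈ C α n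

/-- An Archimedean local order unit space (`A.L.O.U.` space): ground-level cones only. -/
structure ALOU (Γ : Type) (V : Type) [AddCommGroup V] [Module ℂ V]
    [StarAddMonoid V] [StarModule ℂ V] where
  pos : Γ → Set V
  cone : ∀ α, IsVCone (pos α)
  herm : ∀ α, ∀ v ∈ pos α, star v = v
  filtered : ∀ α β : Γ, ∃ γ, pos γ ⊆ pos α ∩ pos β
  proper : ∀ v : V, (∀ α, v ∈ pos α ∧ -v ∈ pos α) → v = 0
  e : V
  eherm : star e = e
  unit : ∀ (α : Γ) (v : V), star v = v → ∃ r : ℝ, 0 < r ∧ (r : ℂ) • e - v ∈ pos α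
  arch : ∀ (α : Γ) (v : V), (∀ r : ℝ, 0 < r → (r : ℂ) • e + v ∈ pos α) → v ∈ pos α

/-- The minimal matrix cones over a family of ground-level cones. -/
def Cmin {Γ : Type} (pos : Γ → Set V) (α : Γ) (n : ℕ) :
    Set (Matrix (Fin n) (Fin n) V) :=
  {A | ∀ L : Fin n → ℂ, (∑ i, ∑ j, ((starRingEnd ℂ) (L i) * L j) • A i j) ∈ pos α}

/-- The maximal matrix cones over a family of ground-level cones:
sums `Σ aᵢ ⊗ vᵢ` with `aᵢ` positive semidefinite scalar matrices and `vᵢ` positive. -/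
def Dmax {Γ : Type} (pos : Γ → Set V) (α : Γ) (n : ℕ) :
    Set (Matrix (Fin n) (Fin n) V) :=
  {A | ∃ (k : ℕ) (a : Fin k → Matrix (Fin n) (Fin n) ℂ) (v : Fin k → V),
    (∀ i, (a i).PosSemidef) ∧ (∀ i, v i ∈ pos α) ∧
    A = Matrix.of fun p q => ∑ i, (a i p q) • v i}

/-- The amplification `φ⁽ᵏ⁾` of a matrix-valued linear map, realized on the index
type `Fin k × ι`. -/
def ampP {S : Type} [AddCommGroup S] [Module ℂ S] {k : ℕ} {ι : Type} [Fintype ι]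
    (φ : S →ₗ[ℂ] Matrix ι ι ℂ) (M : Matrix (Fin k) (Fin k) S) :
    Matrix (Fin k × ι) (Fin k × ι) ℂ :=
  Matrix.of fun ip jq => φ (M ip.1 jq.1) ip.2 jq.2

end


/-!
If `‖M‖_α < s`, the block matrix `[[s e, M], [M*, s e]]` is `α`-positive, and its image under the
local completely positive map `φ` is `[[s φ(e), φ(M)], [φ(M)*, s φ(e)]]`. Compressing
`[[t e, φ(e)], [φ(e), t e]]` by the vector `(1, -1)` shows `φ(e) ≤ t e` for every
`t > ‖φ(e)‖_β`, so adding `s (t e - φ(e))` on the diagonal gives `‖φ⁽ⁿ⁾(M)‖_β ≤ s t`. Hence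
`‖φ⁽ⁿ⁾(M)‖_β ≤ ‖φ(e)‖_β ‖M‖_α` at every matrix level, with equality attained at `M = e`.
-/

open Filter Topology

section BlockMatrix

variable {V W : Type} {n : ℕ}

lemma blk_apply_finSumFinEquiv (A B C D : Matrix (Fin n) (Fin n) V) (x y : Fin n ⊕ Fin n) :
    blk A B C D (finSumFinEquiv x) (finSumFinEquiv y) = Matrix.fromBlocks A B C D x y := by
  simp [blk]

lemma blk_add [Add V] (A B C D A' B' C' D' : Matrix (Fin n) (Fin n) V) :
    blk A B C D + blk A' B' C' D' = blk (A + A') (B + B') (C + C') (D + D') := by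
  simp only [blk, Matrix.reindex_apply, ← Matrix.fromBlocks_add]
  rfl

lemma blk_smul [SMul ℂ V] (c : ℂ) (A B C D : Matrix (Fin n) (Fin n) V) :
    c • blk A B C D = blk (c • A) (c • B) (c • C) (c • D) := by
  simp only [blk, Matrix.reindex_apply, ← Matrix.fromBlocks_smul]
  rfl

lemma blk_map (f : V → W) (A B C D : Matrix (Fin n) (Fin n) V) :
    (blk A B C D).map f = blk (A.map f) (B.map f) (C.map f) (D.map f) := by
  simp only [blk, Matrix.reindex_apply, ← Matrix.submatrix_map, Matrix.fromBlocks_map]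

lemma blk_inj {A B C D A' B' C' D' : Matrix (Fin n) (Fin n) V} :
    blk A B C D = blk A' B' C' D' ↔ A = A' ∧ B = B' ∧ C = C' ∧ D = D' := by
  refine ⟨fun h => ?_, by rintro ⟨rfl, rfl, rfl, rfl⟩; rfl⟩
  have h' := (Matrix.reindex finSumFinEquiv finSumFinEquiv).injective h
  exact ⟨by simpa using congrArg Matrix.toBlocks₁₁ h', by simpa using congrArg Matrix.toBlocks₁₂ h',
    by simpa using congrArg Matrix.toBlocks₂₁ h', by simpa using congrArg Matrix.toBlocks₂₂ h'⟩

lemma blk_diagE_zero_zero_diagE [AddCommGroup V] (e : V) (n : ℕ) :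
    blk (diagE e n) 0 0 (diagE e n) = diagE e (n + n) := by
  ext i j
  obtain ⟨x, rfl⟩ := finSumFinEquiv.surjective i
  obtain ⟨y, rfl⟩ := finSumFinEquiv.surjective j
  rw [blk_apply_finSumFinEquiv]
  simp only [diagE, Matrix.diagonal_apply, finSumFinEquiv.injective.eq_iff]
  rcases x with a | a <;> rcases y with b | b <;> simp [Matrix.diagonal_apply]

lemma diagE_one [AddCommGroup V] (e : V) : diagE e 1 = Matrix.of fun _ _ => e := by
  ext i j
  simp [diagE, Subsingleton.elim i j]

lemma diagE_sub [AddCommGroup V] (e v : V) (n : ℕ) : diagE (e - v) n = diagE e n - diagE v n := by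
  simp [diagE]

lemma diagE_smul [AddCommGroup V] [Module ℂ V] (c : ℂ) (e : V) (n : ℕ) :
    diagE (c • e) n = c • diagE e n := by
  rw [diagE, diagE, ← Matrix.diagonal_smul]
  rfl

lemma map_diagE [AddCommGroup V] [Module ℂ V] [AddCommGroup W] [Module ℂ W] (φ : V →ₗ[ℂ] W)
    (e : V) (n : ℕ) : (diagE e n).map φ = diagE (φ e) n :=
  Matrix.diagonal_map (map_zero φ)

lemma map_smul_diagE [AddCommGroup V] [Module ℂ V] [AddCommGroup W] [Module ℂ W]
    (φ : V →ₗ[ℂ] W) (c : ℂ) (e : V) (n : ℕ) :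
    (c • diagE e n).map φ = c • diagE (φ e) n := by
  rw [Matrix.map_smul _ _ (map_smul φ c), map_diagE]

lemma blk_star [Star V] (A B C D : Matrix (Fin n) (Fin n) V) :
    star (blk A B C D) = blk (star A) (star C) (star B) (star D) := by
  simp only [blk, Matrix.reindex_apply, Matrix.star_eq_conjTranspose,
    Matrix.conjTranspose_submatrix, Matrix.fromBlocks_conjTranspose]

lemma star_diagE [AddCommGroup V] [StarAddMonoid V] {e : V} (he : star e = e) (n : ℕ) :
    star (diagE e n) = diagE e n := by
  simp [diagE, Matrix.star_eq_conjTranspose, he]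

end BlockMatrix

lemma IsVCone.sum_mem {M ι : Type} [AddCommGroup M] [Module ℂ M] {C : Set M} (hC : IsVCone C)
    (s : Finset ι) {f : ι → M} (h : ∀ i ∈ s, f i ∈ C) : ∑ i ∈ s, f i ∈ C := by
  classical
  induction s using Finset.induction_on with
  | empty => simpa using hC.1
  | insert i s hi ih =>
    rw [Finset.sum_insert hi]
    exact hC.2.1 _ (h i (Finset.mem_insert_self i s)) _
      (ih fun j hj => h j (Finset.mem_insert_of_mem hj))

namespace LocalOpSys

variable {Γ V : Type} [AddCommGroup V] [Module ℂ V] [StarAddMonoid V] [StarModule ℂ V]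
  (O : LocalOpSys Γ V) {α : Γ} {n : ℕ}

lemma add_mem {A B : Matrix (Fin n) (Fin n) V} (hA : A ∈ O.C α n) (hB : B ∈ O.C α n) :
    A + B ∈ O.C α n :=
  (O.cone α n).2.1 A hA B hB

lemma smul_mem {r : ℝ} (hr : 0 ≤ r) {A : Matrix (Fin n) (Fin n) V} (hA : A ∈ O.C α n) :
    (r : ℂ) • A ∈ O.C α n :=
  (O.cone α n).2.2 r hr A hA

lemma diagE_e_mem (α : Γ) (n : ℕ) : diagE O.e n ∈ O.C α n := by
  obtain ⟨r, hr, hmem⟩ := O.unit α n (-diagE O.e n) (by rw [star_neg, star_diagE O.eherm])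
  have hr1 : 0 < r + 1 := by linarith
  have hscaled := O.smul_mem (inv_nonneg.2 hr1.le) hmem
  rwa [sub_neg_eq_add, show (r : ℂ) • diagE O.e n + diagE O.e n = ((r + 1 : ℝ) : ℂ) • diagE O.e n
    by push_cast; module, smul_smul, ← Complex.ofReal_mul, inv_mul_cancel₀ hr1.ne',
    Complex.ofReal_one, one_smul] at hscaled

lemma blk_zero_zero_mem {A D : Matrix (Fin n) (Fin n) V} (hA : A ∈ O.C α n)
    (hD : D ∈ O.C α n) : blk A 0 0 D ∈ O.C α (n + n) := by
  let ι (s : Fin n → Fin n ⊕ Fin n) : Matrix (Fin n) (Fin (n + n)) ℂ :=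
    Matrix.of fun p i => if finSumFinEquiv.symm i = s p then 1 else 0
  have hsum : blk A 0 0 D = sconj (ι Sum.inl) A + sconj (ι Sum.inr) D := by
    ext i j
    obtain ⟨x, rfl⟩ := finSumFinEquiv.surjective i
    obtain ⟨y, rfl⟩ := finSumFinEquiv.surjective j
    simp only [ι, sconj, Matrix.of_apply, Matrix.add_apply, blk_apply_finSumFinEquiv,
      Equiv.symm_apply_apply]
    rcases x with a | a <;> rcases y with b | b <;>
      simp [apply_ite (starRingEnd ℂ), ite_smul]
  rw [hsum]
  exact O.add_mem (O.compat α n _ _ A hA) (O.compat α n _ _ D hD)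

lemma exists_blk_mem (α : Γ) (M : Matrix (Fin n) (Fin n) V) : ∃ r : ℝ, 0 ≤ r ∧
    blk ((r : ℂ) • diagE O.e n) M (star M) ((r : ℂ) • diagE O.e n) ∈ O.C α (n + n) := by
  obtain ⟨r, hr, hmem⟩ := O.unit α (n + n) (-blk 0 M (star M) 0) (by rw [star_neg, blk_star]; simp)
  rw [sub_neg_eq_add, ← blk_diagE_zero_zero_diagE, blk_smul, blk_add] at hmem
  exact ⟨r, hr.le, by simpa using hmem⟩

lemma blk_mem_of_le {M : Matrix (Fin n) (Fin n) V} {r s : ℝ}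
    (hr : blk ((r : ℂ) • diagE O.e n) M (star M) ((r : ℂ) • diagE O.e n) ∈ O.C α (n + n))
    (hrs : r ≤ s) :
    blk ((s : ℂ) • diagE O.e n) M (star M) ((s : ℂ) • diagE O.e n) ∈ O.C α (n + n) := by
  have hgap := O.smul_mem (sub_nonneg.2 hrs) (O.diagE_e_mem α (n + n))
  rw [← blk_diagE_zero_zero_diagE, blk_smul] at hgap
  have hsum := O.add_mem hr hgap
  simpa only [blk_add, smul_zero, add_zero, ← add_smul, Complex.ofReal_sub,
    add_sub_cancel] using hsum

lemma nrm_nonneg (α : Γ) (M : Matrix (Fin n) (Fin n) V) : 0 ≤ nrm O.C O.e α n M :=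
  le_csInf (O.exists_blk_mem α M) fun _ h => h.1

lemma nrm_le_of_blk_mem {M : Matrix (Fin n) (Fin n) V} {r : ℝ} (hr : 0 ≤ r)
    (h : blk ((r : ℂ) • diagE O.e n) M (star M) ((r : ℂ) • diagE O.e n) ∈ O.C α (n + n)) :
    nrm O.C O.e α n M ≤ r :=
  csInf_le ⟨0, fun _ h => h.1⟩ ⟨hr, h⟩

lemma blk_mem_of_nrm_lt {M : Matrix (Fin n) (Fin n) V} {t : ℝ} (h : nrm O.C O.e α n M < t) :
    blk ((t : ℂ) • diagE O.e n) M (star M) ((t : ℂ) • diagE O.e n) ∈ O.C α (n + n) := by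
  obtain ⟨r, hr, hrt⟩ := (csInf_lt_iff ⟨0, fun _ h => h.1⟩ (O.exists_blk_mem α M)).1 h
  exact O.blk_mem_of_le hr.2 hrt.le

lemma eq_star_of_blk_mem {A B C D : Matrix (Fin n) (Fin n) V}
    (h : blk A B C D ∈ O.C α (n + n)) : C = star B := by
  have hherm := O.herm α _ _ h
  rw [blk_star, blk_inj] at hherm
  rw [← hherm.2.1, star_star]

lemma nrm_e_le_one (α : Γ) : nrm O.C O.e α 1 (Matrix.of fun _ _ => O.e) ≤ 1 := by
  refine O.nrm_le_of_blk_mem zero_le_one ?_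
  have hones : blk (((1 : ℝ) : ℂ) • diagE O.e 1) (Matrix.of fun _ _ => O.e)
      (star (Matrix.of fun _ _ => O.e)) (((1 : ℝ) : ℂ) • diagE O.e 1) =
      sconj (Matrix.of fun _ _ => (1 : ℂ) : Matrix (Fin 1) (Fin (1 + 1)) ℂ) (diagE O.e 1) := by
    ext i j
    obtain ⟨x, rfl⟩ := finSumFinEquiv.surjective i
    obtain ⟨y, rfl⟩ := finSumFinEquiv.surjective j
    rw [blk_apply_finSumFinEquiv]
    rcases x with a | a <;> rcases y with b | b <;>
      simp [sconj, diagE_one, Matrix.star_apply, O.eherm]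
  rw [hones]
  exact O.compat α 1 _ _ _ (O.diagE_e_mem α 1)

lemma sub_sub_add_mem_of_blk_mem {a b c d : V}
    (h : blk (diagE a 1) (diagE b 1) (diagE c 1) (diagE d 1) ∈ O.C α (1 + 1)) :
    diagE (a - b - c + d) 1 ∈ O.C α 1 := by
  let X : Matrix (Fin (1 + 1)) (Fin 1) ℂ :=
    Matrix.of fun i _ => Sum.elim (fun _ => 1) (fun _ => -1) (finSumFinEquiv.symm i)
  have hX : sconj X (blk (diagE a 1) (diagE b 1) (diagE c 1) (diagE d 1)) =
      diagE (a - b - c + d) 1 := by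
    ext i j
    simp only [diagE_one, sconj, X, Matrix.of_apply, ← Equiv.sum_comp finSumFinEquiv,
      Fintype.sum_sum_type, Fin.sum_univ_one, blk_apply_finSumFinEquiv, Equiv.symm_apply_apply,
      Sum.elim_inl, Sum.elim_inr, Matrix.fromBlocks_apply₁₁, Matrix.fromBlocks_apply₁₂,
      Matrix.fromBlocks_apply₂₁, Matrix.fromBlocks_apply₂₂, map_one, map_neg]
    module
  rw [← hX]
  exact O.compat α _ _ X _ h

lemma diagE_mem_of_mem {w : V} (h : diagE w 1 ∈ O.C α 1) (n : ℕ) :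
    diagE w n ∈ O.C α n := by
  have hsum : diagE w n =
      ∑ k : Fin n, sconj (Matrix.single 0 k 1 : Matrix (Fin 1) (Fin n) ℂ) (diagE w 1) := by
    ext i j
    simp [sconj, diagE, Matrix.sum_apply, Matrix.single_apply, Matrix.diagonal_apply, eq_comm]
  rw [hsum]
  exact (O.cone α n).sum_mem _ fun k _ => O.compat α 1 n _ _ h

lemma smul_diagE_sub_mem_of_nrm_lt {v : V} (hv : star v = v) {t : ℝ}
    (h : nrm O.C O.e α 1 (Matrix.of fun _ _ => v) < t) (n : ℕ) :
    (t : ℂ) • diagE O.e n - diagE v n ∈ O.C α n := by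
  have hblk := O.blk_mem_of_nrm_lt h
  rw [← diagE_one, star_diagE hv, ← diagE_smul] at hblk
  have hhalf := O.smul_mem (by norm_num : (0 : ℝ) ≤ 1 / 2) (O.sub_sub_add_mem_of_blk_mem hblk)
  rw [← diagE_smul, show ((1 / 2 : ℝ) : ℂ) • ((t : ℂ) • O.e - v - v + (t : ℂ) • O.e) =
    (t : ℂ) • O.e - v by push_cast; module] at hhalf
  simpa only [diagE_sub, diagE_smul] using O.diagE_mem_of_mem hhalf n

end LocalOpSys

section LocalCompletelyPositive

variable {Γ Λ V W : Type} [AddCommGroup V] [Module ℂ V] [StarAddMonoid V] [StarModule ℂ V]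
  [AddCommGroup W] [Module ℂ W] [StarAddMonoid W] [StarModule ℂ W]

def IsLocalCPMap (S : LocalOpSys Γ V) (T : LocalOpSys Λ W) (φ : V →ₗ[ℂ] W) (α : Γ) (β : Λ) :
    Prop :=
  ∀ (n : ℕ) (M : Matrix (Fin n) (Fin n) V), M ∈ S.C α n → M.map φ ∈ T.C β n

variable {S : LocalOpSys Γ V} {T : LocalOpSys Λ W} {φ : V →ₗ[ℂ] W} {α : Γ} {β : Λ}

namespace IsLocalCPMap

lemma star_map_e (hφ : IsLocalCPMap S T φ α β) : star (φ S.e) = φ S.e := by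
  have hherm := T.herm β 1 _ (hφ 1 _ (S.diagE_e_mem α 1))
  simpa [map_diagE, diagE_one, Matrix.star_apply] using congrFun (congrFun hherm 0) 0

lemma nrm_map_le_mul_of_lt (hφ : IsLocalCPMap S T φ α β) {n : ℕ} {M : Matrix (Fin n) (Fin n) V}
    {s t : ℝ} (hs : nrm S.C S.e α n M < s)
    (ht : nrm T.C T.e β 1 (Matrix.of fun _ _ => φ S.e) < t) :
    nrm T.C T.e β n (M.map φ) ≤ t * s := by
  have hs0 : 0 ≤ s := (S.nrm_nonneg α M).trans hs.le
  have ht0 : 0 ≤ t := (T.nrm_nonneg β _).trans ht.le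
  have himage := hφ _ _ (S.blk_mem_of_nrm_lt hs)
  rw [blk_map, map_smul_diagE] at himage
  rw [T.eq_star_of_blk_mem himage] at himage
  have hgap := T.smul_mem hs0 (T.smul_diagE_sub_mem_of_nrm_lt hφ.star_map_e ht n)
  have hsum := T.add_mem himage (T.blk_zero_zero_mem hgap hgap)
  have hdiag : (s : ℂ) • diagE (φ S.e) n + (s : ℂ) • ((t : ℂ) • diagE T.e n - diagE (φ S.e) n) =
      ((t * s : ℝ) : ℂ) • diagE T.e n := by
    push_cast
    module
  rw [blk_add, hdiag, add_zero, add_zero] at hsum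
  exact T.nrm_le_of_blk_mem (mul_nonneg ht0 hs0) hsum

theorem nrm_map_le_mul (hφ : IsLocalCPMap S T φ α β) {n : ℕ} (M : Matrix (Fin n) (Fin n) V) :
    nrm T.C T.e β n (M.map φ) ≤
      nrm T.C T.e β 1 (Matrix.of fun _ _ => φ S.e) * nrm S.C S.e α n M := by
  set N := nrm T.C T.e β 1 (Matrix.of fun _ _ => φ S.e)
  set m := nrm S.C S.e α n M
  have hlim : Tendsto (fun δ : ℝ => (N + δ) * (m + δ)) (𝓝[>] 0) (𝓝 (N * m)) := by
    have hcont : Continuous fun δ : ℝ => (N + δ) * (m + δ) := by fun_prop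
    simpa using (hcont.tendsto 0).mono_left nhdsWithin_le_nhds
  refine ge_of_tendsto hlim (eventually_nhdsWithin_of_forall fun δ (hδ : 0 < δ) => ?_)
  exact hφ.nrm_map_le_mul_of_lt (lt_add_of_pos_right m hδ) (lt_add_of_pos_right N hδ)

end IsLocalCPMap

end LocalCompletelyPositive

theorem statement11_general {Γ Λ Vs B : Type} [AddCommGroup Vs] [Module ℂ Vs]
    [StarAddMonoid Vs] [StarModule ℂ Vs]
    [Ring B] [Algebra ℂ B] [StarRing B] [StarModule ℂ B]
    (S : LocalOpSys Γ Vs) (T : LocalOpSys Λ B)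
    (φ : Vs →ₗ[ℂ] B) (α : Γ) (β : Λ)
    (hcp : ∀ (n : ℕ) (M : Matrix (Fin n) (Fin n) Vs),
      M ∈ S.C α n → M.map ⇑φ ∈ T.C β n) :
    BddAbove {r : ℝ | ∃ (n : ℕ) (M : Matrix (Fin n) (Fin n) Vs),
        nrm S.C S.e α n M ≤ 1 ∧ r = nrm T.C T.e β n (M.map ⇑φ)} ∧
    sSup {r : ℝ | ∃ (n : ℕ) (M : Matrix (Fin n) (Fin n) Vs),
        nrm S.C S.e α n M ≤ 1 ∧ r = nrm T.C T.e β n (M.map ⇑φ)} =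
      nrm T.C T.e β 1 (Matrix.of fun _ _ => φ S.e) ∧
    sSup {r : ℝ | ∃ M : Matrix (Fin 1) (Fin 1) Vs,
        nrm S.C S.e α 1 M ≤ 1 ∧ r = nrm T.C T.e β 1 (M.map ⇑φ)} =
      nrm T.C T.e β 1 (Matrix.of fun _ _ => φ S.e) := by
  set N := nrm T.C T.e β 1 (Matrix.of fun _ _ => φ S.e)
  have hbound : ∀ n (M : Matrix (Fin n) (Fin n) Vs), nrm S.C S.e α n M ≤ 1 →
      nrm T.C T.e β n (M.map φ) ≤ N := fun n M hM =>
    (IsLocalCPMap.nrm_map_le_mul hcp M).trans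
      (mul_le_of_le_one_right (T.nrm_nonneg β _) hM)
  have hunit : nrm S.C S.e α 1 (Matrix.of fun _ _ => S.e) ≤ 1 ∧
      N = nrm T.C T.e β 1 ((Matrix.of fun _ _ => S.e).map φ) := ⟨S.nrm_e_le_one α, rfl⟩
  have hlcb : IsGreatest {r : ℝ | ∃ (n : ℕ) (M : Matrix (Fin n) (Fin n) Vs),
      nrm S.C S.e α n M ≤ 1 ∧ r = nrm T.C T.e β n (M.map φ)} N :=
    ⟨⟨1, _, hunit⟩, by rintro _ ⟨n, M, hM, rfl⟩; exact hbound n M hM⟩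
  have hlb : IsGreatest {r : ℝ | ∃ M : Matrix (Fin 1) (Fin 1) Vs,
      nrm S.C S.e α 1 M ≤ 1 ∧ r = nrm T.C T.e β 1 (M.map φ)} N :=
    ⟨⟨_, hunit⟩, by rintro _ ⟨M, hM, rfl⟩; exact hbound 1 M hM⟩
  exact ⟨hlcb.bddAbove, hlcb.csSup_eq, hlb.csSup_eq⟩

/-- a local completely positive map from a local operator system into a
Pro-C*-algebra is local completely bounded, and
`‖φ(1)‖_β = ‖φ‖_{(α,β)} = ‖φ‖^{lcb}_{(α,β)}`. -/
theorem statement11 {Γ Λ Vs B : Type} [AddCommGroup Vs] [Module ℂ Vs]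
    [StarAddMonoid Vs] [StarModule ℂ Vs]
    [Ring B] [Algebra ℂ B] [StarRing B] [StarModule ℂ B]
    (S : LocalOpSys Γ Vs) (T : LocalOpSys Λ B) (hTe : T.e = 1)
    (φ : Vs →ₗ[ℂ] B) (α : Γ) (β : Λ)
    (hcp : ∀ (n : ℕ) (M : Matrix (Fin n) (Fin n) Vs),
      M ∈ S.C α n → M.map ⇑φ ∈ T.C β n) :
    BddAbove {r : ℝ | ∃ (n : ℕ) (M : Matrix (Fin n) (Fin n) Vs),
        nrm S.C S.e α n M ≤ 1 ∧ r = nrm T.C T.e β n (M.map ⇑φ)} ∧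
    sSup {r : ℝ | ∃ (n : ℕ) (M : Matrix (Fin n) (Fin n) Vs),
        nrm S.C S.e α n M ≤ 1 ∧ r = nrm T.C T.e β n (M.map ⇑φ)} =
      nrm T.C T.e β 1 (Matrix.of fun _ _ => φ S.e) ∧
    sSup {r : ℝ | ∃ M : Matrix (Fin 1) (Fin 1) Vs,
        nrm S.C S.e α 1 M ≤ 1 ∧ r = nrm T.C T.e β 1 (M.map ⇑φ)} =
      nrm T.C T.e β 1 (Matrix.of fun _ _ => φ S.e) :=
  statement11_general S T φ α β hcp
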